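/- arXiv:2110.07680 — 2 statements merged into one kernel-verified Lean document; each statement's English description precedes it below -/
import Mathlib

section
/- For vectors k_i, k_j in a Hilbert space with orthogonal projections P_i, P_j onto their spans, the operator norm ‖P_i - P_j‖ equals sqrt(1 - |⟨k_i,k_j⟩|²/(‖k_i‖²‖k_j‖²)), provided k_i and k_j are nonzero. -/
/-!
For orthogonal projections `P`, `Q` onto `K`, `L`, the decomposition
`(P - Q) x = (1 - Q) P x - Q (1 - P) x` is orthogonal, so
`‖P - Q‖ = max ‖(1 - Q) P‖ ‖(1 - P) Q‖`, using `‖Q (1 - P)‖ = ‖((1 - P) Q)†‖`, and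
`(1 - Q) P = (P - Q) P` for the reverse inequality.
For the projections onto unit vectors `u`, `v`, the operator `(1 - Q) P` is the rank-one map
`x ↦ ⟪u, x⟫ • (1 - Q) u`, whose norm `‖(1 - Q) u‖ = √(1 - ‖⟪u, v⟫‖²)` comes from Pythagoras;
the same holds with `u` and `v` swapped. Nonzero vectors are normalised first.
-/

open scoped ComplexInnerProductSpace

open ContinuousLinearMap InnerProductSpace

namespace Submodule

variable {𝕜 E : Type*} [RCLike 𝕜] [NormedAddCommGroup E] [InnerProductSpace 𝕜 E]

section TwoProjections

variable (K L : Submodule 𝕜 E) [K.HasOrthogonalProjection] [L.HasOrthogonalProjection]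

theorem starProjection_sub_apply_eq_sub (x : E) :
    (K.starProjection - L.starProjection) x =
      Lᗮ.starProjection (K.starProjection x) - L.starProjection (Kᗮ.starProjection x) := by
  simp only [sub_apply, starProjection_orthogonal_val, map_sub]
  abel

theorem norm_sq_starProjection_sub_apply (x : E) :
    ‖(K.starProjection - L.starProjection) x‖ ^ 2 =
      ‖Lᗮ.starProjection (K.starProjection x)‖ ^ 2 +
        ‖L.starProjection (Kᗮ.starProjection x)‖ ^ 2 := by
  have h : ⟪Lᗮ.starProjection (K.starProjection x),
      L.starProjection (Kᗮ.starProjection x)⟫_𝕜 = 0 :=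
    inner_left_of_mem_orthogonal (L.starProjection_apply_mem _) (starProjection_apply_mem _ _)
  rw [starProjection_sub_apply_eq_sub, @norm_sub_sq 𝕜, h, map_zero, mul_zero, sub_zero]

theorem norm_apply_starProjection_le {F : Type*} [SeminormedAddCommGroup F] [NormedSpace 𝕜 F]
    (A : E →L[𝕜] F) (x : E) :
    ‖A (K.starProjection x)‖ ≤ ‖A ∘L K.starProjection‖ * ‖K.starProjection x‖ := by
  simpa [starProjection_eq_self_iff.mpr (K.starProjection_apply_mem x)]
    using (A ∘L K.starProjection).le_opNorm (K.starProjection x)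

theorem norm_starProjection_sub_le_max :
    ‖K.starProjection - L.starProjection‖ ≤
      max ‖Lᗮ.starProjection ∘L K.starProjection‖ ‖L.starProjection ∘L Kᗮ.starProjection‖ := by
  set M := max ‖Lᗮ.starProjection ∘L K.starProjection‖ ‖L.starProjection ∘L Kᗮ.starProjection‖
  refine opNorm_le_bound _ (by positivity) fun x ↦ ?_
  have hK : ‖Lᗮ.starProjection (K.starProjection x)‖ ≤ M * ‖K.starProjection x‖ :=
    (K.norm_apply_starProjection_le _ x).trans (by gcongr; exact le_max_left _ _)
  have hKperp : ‖L.starProjection (Kᗮ.starProjection x)‖ ≤ M * ‖Kᗮ.starProjection x‖ :=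
    (Kᗮ.norm_apply_starProjection_le _ x).trans (by gcongr; exact le_max_right _ _)
  refine le_of_pow_le_pow_left₀ two_ne_zero (by positivity) ?_
  rw [norm_sq_starProjection_sub_apply, mul_pow, K.norm_sq_eq_add_norm_sq_starProjection x,
    mul_add]
  gcongr <;> rw [← mul_pow] <;> gcongr

theorem norm_orthogonal_comp_starProjection_le :
    ‖Lᗮ.starProjection ∘L K.starProjection‖ ≤ ‖K.starProjection - L.starProjection‖ := by
  have h : Lᗮ.starProjection ∘L K.starProjection =
      (K.starProjection - L.starProjection) ∘L K.starProjection := by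
    ext x
    simp [starProjection_orthogonal_val,
      starProjection_eq_self_iff.mpr (K.starProjection_apply_mem x)]
  rw [h]
  exact (opNorm_comp_le _ _).trans
    (mul_le_of_le_one_right (norm_nonneg _) K.starProjection_norm_le)

theorem norm_starProjection_comp_comm [CompleteSpace E] :
    ‖K.starProjection ∘L L.starProjection‖ = ‖L.starProjection ∘L K.starProjection‖ := by
  rw [← norm_star, ← ContinuousLinearMap.mul_def, star_mul,
    (isSelfAdjoint_starProjection K).star_eq, (isSelfAdjoint_starProjection L).star_eq,
    ContinuousLinearMap.mul_def]

theorem norm_starProjection_sub [CompleteSpace E] :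
    ‖K.starProjection - L.starProjection‖ =
      max ‖Lᗮ.starProjection ∘L K.starProjection‖ ‖Kᗮ.starProjection ∘L L.starProjection‖ := by
  refine le_antisymm ?_ (max_le (norm_orthogonal_comp_starProjection_le K L) ?_)
  · simpa only [norm_starProjection_comp_comm L Kᗮ] using norm_starProjection_sub_le_max K L
  · simpa only [norm_sub_rev] using norm_orthogonal_comp_starProjection_le L K

end TwoProjections

section SpanSingleton

variable {u v : E}

theorem starProjection_span_singleton_eq_rankOne (hu : ‖u‖ = 1) :
    (𝕜 ∙ u).starProjection = rankOne 𝕜 u u := by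
  ext w
  simp [starProjection_unit_singleton 𝕜 hu]

theorem norm_comp_starProjection_span_singleton {F : Type*} [SeminormedAddCommGroup F]
    [NormedSpace 𝕜 F] (A : E →L[𝕜] F) (hu : ‖u‖ = 1) :
    ‖A ∘L (𝕜 ∙ u).starProjection‖ = ‖A u‖ := by
  rw [starProjection_span_singleton_eq_rankOne hu, comp_rankOne, norm_rankOne, hu, mul_one]

theorem norm_starProjection_orthogonal_span_singleton_apply (hu : ‖u‖ = 1) (hv : ‖v‖ = 1) :
    ‖(𝕜 ∙ v)ᗮ.starProjection u‖ = √(1 - ‖⟪v, u⟫_𝕜‖ ^ 2) := by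
  have h := (𝕜 ∙ v).norm_sq_eq_add_norm_sq_starProjection u
  rw [starProjection_unit_singleton 𝕜 hv, norm_smul, hv, mul_one, hu, one_pow] at h
  rw [h, add_sub_cancel_left, Real.sqrt_sq (norm_nonneg _)]

theorem norm_starProjection_span_singleton_sub_of_norm_eq_one [CompleteSpace E]
    (hu : ‖u‖ = 1) (hv : ‖v‖ = 1) :
    ‖(𝕜 ∙ u).starProjection - (𝕜 ∙ v).starProjection‖ = √(1 - ‖⟪u, v⟫_𝕜‖ ^ 2) := by
  rw [norm_starProjection_sub, norm_comp_starProjection_span_singleton _ hu,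
    norm_comp_starProjection_span_singleton _ hv,
    norm_starProjection_orthogonal_span_singleton_apply hu hv,
    norm_starProjection_orthogonal_span_singleton_apply hv hu, norm_inner_symm, max_self]

theorem norm_starProjection_span_singleton_sub [CompleteSpace E] (hu : u ≠ 0) (hv : v ≠ 0) :
    ‖(𝕜 ∙ u).starProjection - (𝕜 ∙ v).starProjection‖ =
      √(1 - ‖⟪u, v⟫_𝕜‖ ^ 2 / (‖u‖ ^ 2 * ‖v‖ ^ 2)) := by
  have hspan (w : E) (hw : w ≠ 0) : (𝕜 ∙ ((‖w‖⁻¹ : 𝕜) • w)) = 𝕜 ∙ w :=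
    span_singleton_smul_eq (IsUnit.mk0 _ (by simpa using hw)) w
  simp only [← hspan u hu, ← hspan v hv]
  rw [norm_starProjection_span_singleton_sub_of_norm_eq_one (norm_smul_inv_norm hu)
      (norm_smul_inv_norm hv), inner_smul_left, inner_smul_right]
  simp only [norm_mul, RCLike.norm_conj, norm_inv, RCLike.norm_ofReal, abs_norm]
  field_simp

end SpanSingleton

end Submodule

/-- For nonzero vectors `ki, kj`, the operator norm of the difference of the orthogonal
projections onto their spans equals `√(1 - |⟪ki,kj⟫|²/(‖ki‖²‖kj‖²))`. -/
theorem stmt_1 {H : Type*} [NormedAddCommGroup H] [InnerProductSpace ℂ H]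
    [CompleteSpace H] (ki kj : H) (hi : ki ≠ 0) (hj : kj ≠ 0) :
    ‖((ℂ ∙ ki).subtypeL.comp (Submodule.orthogonalProjectionOnto (ℂ ∙ ki)) :  H →L[ℂ] H) -
      (ℂ ∙ kj).subtypeL.comp (Submodule.orthogonalProjectionOnto (ℂ ∙ kj))‖ =
    Real.sqrt (1 - ‖⟪ki, kj⟫‖ ^ 2 / (‖ki‖ ^ 2 * ‖kj‖ ^ 2)) :=
  Submodule.norm_starProjection_span_singleton_sub hi hj
end

section
/- A finite dimensional RKHS H with kernel basis {k_i} admits a conjugation operator J with ⟨k_i, J k_j⟩ = δ_{ij} (i.e., J maps the kernel basis to its dual basis) if and only if its Gram matrix K satisfies K Kᵀ = I, i.e., K is an orthogonal matrix (K⁻¹ = Kᵀ). -/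
open scoped ComplexInnerProductSpace Matrix

/-!
With `K = gram b`, the only candidate for `J` is `u ↦ ∑ m, ⟪u, b m⟫ • b m`, which sends `b j` to
`∑ m, K j m • b m`, so that `⟪b i, J (b j)⟫ = (K * Kᵀ) i j`. Conversely, any conjugate-linear
involution `J` with `⟪b i, J (b j)⟫ = δᵢⱼ` satisfies `⟪b i, J v⟫ = conj (b.repr v i)`; applied to
`v = J (b j)` this reads off the coordinates of `J (b j)` as the `j`-th row of `K`. When
`K * Kᵀ = 1`, the candidate is an involution because `Kᵀ * K = 1`, and it is isometric because
`⟪J u, v⟫` is symmetric in `u` and `v`.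
-/

namespace Module.Basis

open Matrix
open scoped InnerProductSpace

variable {𝕜 H ι : Type*} [RCLike 𝕜] [NormedAddCommGroup H] [InnerProductSpace 𝕜 H] [Fintype ι]
  (b : Basis ι 𝕜 H)

noncomputable def gramConj : H →ₗ⋆[𝕜] H where
  toFun u := ∑ m, ⟪u, b m⟫_𝕜 • b m
  map_add' u v := by simp only [inner_add_left, add_smul, Finset.sum_add_distrib]
  map_smul' c u := by simp only [inner_smul_left, mul_smul, Finset.smul_sum]

theorem gramConj_apply (u : H) : b.gramConj u = ∑ m, ⟪u, b m⟫_𝕜 • b m := rfl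

theorem inner_gramConj_left (u v : H) :
    ⟪b.gramConj u, v⟫_𝕜 = ∑ m, ⟪b m, u⟫_𝕜 * ⟪b m, v⟫_𝕜 := by
  simp only [gramConj_apply, sum_inner, inner_smul_left, inner_conj_symm]

theorem inner_gramConj_comm (u v : H) : ⟪b.gramConj u, v⟫_𝕜 = ⟪b.gramConj v, u⟫_𝕜 := by
  simp only [inner_gramConj_left, mul_comm]

theorem inner_gramConj_basis [DecidableEq ι] (i j : ι) :
    ⟪b i, b.gramConj (b j)⟫_𝕜 = (gram 𝕜 b * (gram 𝕜 b)ᵀ) i j := by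
  simp only [gramConj_apply, inner_sum, inner_smul_right, mul_apply, transpose_apply, gram_apply,
    mul_comm]

theorem inner_basis_eq_gram_mulVec (i : ι) (v : H) :
    ⟪b i, v⟫_𝕜 = (gram 𝕜 b *ᵥ b.repr v) i := by
  conv_lhs => rw [← b.sum_repr v]
  simp only [inner_sum, inner_smul_right, mulVec, dotProduct, gram_apply, mul_comm]

variable {b}

theorem gramConj_gramConj [DecidableEq ι] (hK : (gram 𝕜 b)ᵀ * gram 𝕜 b = 1) (u : H) :
    b.gramConj (b.gramConj u) = u := by
  have hcoord (l : ι) : ⟪b.gramConj u, b l⟫_𝕜 = b.repr u l := by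
    calc ⟪b.gramConj u, b l⟫_𝕜 = ((gram 𝕜 b *ᵥ b.repr u) ᵥ* gram 𝕜 b) l := by
          simp only [inner_gramConj_left, inner_basis_eq_gram_mulVec b _ u]; rfl
      _ = b.repr u l := by rw [← mulVec_transpose (gram 𝕜 b), mulVec_mulVec, hK, one_mulVec]
  conv_rhs => rw [← b.sum_repr u]
  simp only [gramConj_apply b (b.gramConj u), hcoord]

theorem norm_gramConj [DecidableEq ι] (hK : (gram 𝕜 b)ᵀ * gram 𝕜 b = 1) (u : H) :
    ‖b.gramConj u‖ = ‖u‖ := by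
  rw [@norm_eq_sqrt_re_inner 𝕜, @norm_eq_sqrt_re_inner 𝕜, inner_gramConj_comm,
    gramConj_gramConj hK]

section DualBasis

variable [DecidableEq ι] {J : H →ₗ⋆[𝕜] H}

theorem inner_basis_apply_eq_conj_repr
    (hJ : ∀ i j, ⟪b i, J (b j)⟫_𝕜 = if i = j then 1 else 0) (i : ι) (v : H) :
    ⟪b i, J v⟫_𝕜 = starRingEnd 𝕜 (b.repr v i) := by
  conv_lhs => rw [← b.sum_repr v]
  simp only [map_sum, map_smulₛₗ, inner_sum, inner_smul_right, hJ, mul_ite, mul_one, mul_zero,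
    Finset.sum_ite_eq, Finset.mem_univ, if_true]

theorem apply_basis_eq_gramConj
    (hJ : ∀ i j, ⟪b i, J (b j)⟫_𝕜 = if i = j then 1 else 0) (hinv : ∀ u, J (J u) = u) (j : ι) :
    J (b j) = b.gramConj (b j) := by
  have hcoord (m : ι) : b.repr (J (b j)) m = ⟪b j, b m⟫_𝕜 := by
    have h := inner_basis_apply_eq_conj_repr hJ m (J (b j))
    rw [hinv, ← inner_conj_symm] at h
    exact ((starRingEnd 𝕜).injective h).symm
  conv_lhs => rw [← b.sum_repr (J (b j))]
  simp only [gramConj_apply, hcoord]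

end DualBasis

end Module.Basis

open Module.Basis in
theorem stmt_4_general {H : Type*} [NormedAddCommGroup H] [InnerProductSpace ℂ H]
    {n : ℕ} (b : Module.Basis (Fin n) ℂ H) :
    (∃ J : H → H,
      (∀ u v, J (u + v) = J u + J v) ∧
      (∀ (lam : ℂ) (u : H), J (lam • u) = (starRingEnd ℂ) lam • J u) ∧
      (∀ u, ‖J u‖ = ‖u‖) ∧
      (∀ u, J (J u) = u) ∧
      (∀ i j, ⟪b i, J (b j)⟫ = if i = j then 1 else 0)) ↔
    (Matrix.of fun i j => ⟪b i, b j⟫) * (Matrix.of fun i j => ⟪b i, b j⟫)ᵀ = 1 := by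
  change _ ↔ Matrix.gram ℂ b * (Matrix.gram ℂ b)ᵀ = 1
  constructor
  · rintro ⟨J, hadd, hsmul, -, hinv, hdelta⟩
    let J' : H →ₗ⋆[ℂ] H := ⟨⟨J, hadd⟩, hsmul⟩
    ext i j
    rw [← inner_gramConj_basis, ← apply_basis_eq_gramConj (J := J') hdelta hinv, Matrix.one_apply]
    exact hdelta i j
  · intro hK
    have hK' := mul_eq_one_comm.mp hK
    exact ⟨b.gramConj, map_add _, map_smulₛₗ _, norm_gramConj hK', gramConj_gramConj hK',
      fun i j => by rw [inner_gramConj_basis, hK, Matrix.one_apply]⟩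

/-- A finite dimensional RKHS with kernel basis `{kᵢ}` admits a conjugation operator mapping
the kernel basis to its dual basis iff its Gram matrix `K` satisfies `K * Kᵀ = 1`. -/
theorem stmt_4 {H : Type*} [NormedAddCommGroup H] [InnerProductSpace ℂ H]
    [FiniteDimensional ℂ H] {n : ℕ} (b : Module.Basis (Fin n) ℂ H) :
    (∃ J : H → H,
      (∀ u v, J (u + v) = J u + J v) ∧
      (∀ (lam : ℂ) (u : H), J (lam • u) = (starRingEnd ℂ) lam • J u) ∧
      (∀ u, ‖J u‖ = ‖u‖) ∧
      (∀ u, J (J u) = u) ∧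
      (∀ i j, ⟪b i, J (b j)⟫ = if i = j then 1 else 0)) ↔
    (Matrix.of fun i j => ⟪b i, b j⟫) * (Matrix.of fun i j => ⟪b i, b j⟫)ᵀ = 1 :=
  stmt_4_general b
end
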